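/- Let λ ∈ ℝ^n be nonzero with λ_1 ≥ λ_2 ≥ … ≥ λ_n ≥ 0, let τ > 0 and b ∈ ℝ^n, let ψ(y) = ⟨Π_C(yλ + b), λ⟩ − τ, and let y* be the unique minimizer over ℝ of φ(y) = ½‖Π_C(yλ + b)‖² − yτ − ½‖b‖². Then there exists ε > 0 such that for every y ∈ ℝ with |y − y*| < ε and every M ∈ M(y): M > 0 and y − ψ(y)/M = y*. In particular, one exact semismooth Newton step from any point sufficiently close to y* lands exactly on y*. -/

import Mathlib

open Matrix

/-- The matrix `B` with `(Bx)_i = x_i − x_{i+1}` for `1 ≤ i ≤ n−1` and `(Bx)_n = x_n`. -/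
def Bmat (n : ℕ) : Matrix (Fin n) (Fin n) ℝ :=
  Matrix.of fun i j => if j = i then 1 else if (j : ℕ) = (i : ℕ) + 1 then -1 else 0

/-- `B_Γ`, the submatrix of `B` formed by the rows indexed by `Γ`. -/
def subRows {n : ℕ} (Γ : Finset (Fin n)) : Matrix {i // i ∈ Γ} (Fin n) ℝ :=
  Matrix.of fun i j => Bmat n i.1 j

/-- `H = I_n − B_Γᵀ (B_Γ B_Γᵀ)⁻¹ B_Γ`, the orthogonal projection onto the null space of
`B_Γ` (equal to `I_n` when `Γ = ∅`). -/
noncomputable def Hmat {n : ℕ} (Γ : Finset (Fin n)) : Matrix (Fin n) (Fin n) ℝ :=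
  1 - (subRows Γ)ᵀ * (subRows Γ * (subRows Γ)ᵀ)⁻¹ * subRows Γ

/-- The monotone nonnegative cone `C = {x : x₁ ≥ x₂ ≥ … ≥ xₙ ≥ 0}`. -/
def coneC (n : ℕ) : Set (Fin n → ℝ) :=
  {x | (∀ i j : Fin n, i ≤ j → x j ≤ x i) ∧ ∀ i, 0 ≤ x i}

/-- `Pc` is the Euclidean (metric) projection onto the cone `C`:
`Pc d` minimizes `½‖x − d‖²` over `x ∈ C`. -/
def IsProjC {n : ℕ} (Pc : (Fin n → ℝ) → Fin n → ℝ) : Prop :=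
  ∀ d : Fin n → ℝ, Pc d ∈ coneC n ∧
    ∀ x ∈ coneC n, (1/2) * ∑ i, (Pc d i - d i)^2 ≤ (1/2) * ∑ i, (x i - d i)^2

/-- `z(d) = (Bᵀ)⁻¹(d − Π_C(d))`. -/
noncomputable def zdual {n : ℕ} (Pc : (Fin n → ℝ) → Fin n → ℝ) (d : Fin n → ℝ) :
    Fin n → ℝ :=
  Matrix.mulVec ((Bmat n)ᵀ)⁻¹ (d - Pc d)

/-- `K(d) = {Γ : Supp(z(d)) ⊆ Γ ⊆ I(Π_C(d))}`. -/
def Kset {n : ℕ} (Pc : (Fin n → ℝ) → Fin n → ℝ) (d : Fin n → ℝ) :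
    Set (Finset (Fin n)) :=
  {Γ | (∀ i, zdual Pc d i ≠ 0 → i ∈ Γ) ∧ ∀ i ∈ Γ, (Bmat n).mulVec (Pc d) i = 0}

/-- `H(d) = {I_n − B_Γᵀ(B_Γ B_Γᵀ)⁻¹ B_Γ : Γ ∈ K(d)}`, the HS-Jacobian of `Π_C` at `d`. -/
def Hset {n : ℕ} (Pc : (Fin n → ℝ) → Fin n → ℝ) (d : Fin n → ℝ) :
    Set (Matrix (Fin n) (Fin n) ℝ) :=
  {H | ∃ Γ ∈ Kset Pc d, H = Hmat Γ}

/-- `M(y) = {λᵀHλ : H ∈ H(yλ + b)}`. -/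
def Mset {n : ℕ} (Pc : (Fin n → ℝ) → Fin n → ℝ) (lam b : Fin n → ℝ) (y : ℝ) : Set ℝ :=
  {m | ∃ H ∈ Hset Pc (y • lam + b), m = dotProduct lam (H.mulVec lam)}

/-- The dual objective `φ(y) = ½‖Π_C(yλ + b)‖² − yτ − ½‖b‖²`. -/
noncomputable def phiFun {n : ℕ} (Pc : (Fin n → ℝ) → Fin n → ℝ) (lam b : Fin n → ℝ)
    (τ : ℝ) : ℝ → ℝ :=
  fun y => (1/2) * ∑ i, (Pc (y • lam + b) i)^2 - y * τ - (1/2) * ∑ i, (b i)^2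

/-- `ψ(y) = ⟨Π_C(yλ + b), λ⟩ − τ` (the derivative `φ′` of the dual objective). -/
noncomputable def psiFun {n : ℕ} (Pc : (Fin n → ℝ) → Fin n → ℝ) (lam b : Fin n → ℝ)
    (τ : ℝ) : ℝ → ℝ :=
  fun y => (∑ i, Pc (y • lam + b) i * lam i) - τ

/-- The Euclidean norm on `ℝⁿ`. -/
noncomputable def enorm {n : ℕ} (x : Fin n → ℝ) : ℝ :=
  Real.sqrt (∑ i, (x i)^2)


/-!
The projection `Π_C` is nonexpansive, so `z(d)` and `B Π_C(d)` depend continuously on `d`;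
their nonzero coordinates stay nonzero nearby, hence `K(d') ⊆ K(d)` for `d'` near `d`.
For `Γ ∈ K(d)` the matrix `H` is the orthogonal projector onto `ker B_Γ`, and
`d = Π_C(d) + B_Γᵀ z_Γ` with `B_Γ Π_C(d) = 0`, so `H d = Π_C(d)`. Thus if `Γ` lies in both
`K(yλ + b)` and `K(y*λ + b)`, then `ψ(y) - ψ(y*) = (y - y*) λᵀHλ`.
Since `Π_C(d)` is a subgradient of `½‖Π_C(d)‖²`, at the minimiser `0 ≤ (y - y*) ψ(y)` for all
`y`, and continuity gives `ψ(y*) = 0`. Finally `λᵀHλ = ‖Hλ‖² > 0`, because `Hλ = 0` would force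
`ψ(y*) = -τ`.
-/

open Filter Topology Set

theorem sum_sq_eq_dotProduct {ι : Type*} [Fintype ι] (x : ι → ℝ) : ∑ i, x i ^ 2 = x ⬝ᵥ x := by
  simp [dotProduct, sq]

theorem nonneg_of_forall_mul_add_mul_sq_nonneg {a b : ℝ}
    (h : ∀ t ∈ Ioc (0 : ℝ) 1, 0 ≤ a * t + b * t ^ 2) : 0 ≤ a := by
  have hlim : Tendsto (fun t => a + b * t) (𝓝[>] 0) (𝓝 a) := by
    simpa using ((show Continuous fun t : ℝ => a + b * t by fun_prop).tendsto 0).mono_left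
      nhdsWithin_le_nhds
  refine ge_of_tendsto hlim ?_
  filter_upwards [Ioc_mem_nhdsGT one_pos] with t ht
  exact nonneg_of_mul_nonneg_right (by linarith [h t ht]) ht.1

theorem eq_zero_of_forall_sub_mul_nonneg {f : ℝ → ℝ} {a : ℝ} (hf : ContinuousAt f a)
    (h : ∀ y, 0 ≤ (y - a) * f y) : f a = 0 := by
  apply le_antisymm
  · refine le_of_tendsto (hf.tendsto.mono_left (nhdsWithin_le_nhds (s := Iio a))) ?_
    filter_upwards [self_mem_nhdsWithin] with y (hy : y < a)
    exact nonpos_of_mul_nonneg_right (h y) (by linarith)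
  · refine ge_of_tendsto (hf.tendsto.mono_left (nhdsWithin_le_nhds (s := Ioi a))) ?_
    filter_upwards [self_mem_nhdsWithin] with y (hy : a < y)
    exact nonneg_of_mul_nonneg_right (h y) (by linarith)

theorem ContinuousAt.eventually_support_subset {X ι : Type*} [TopologicalSpace X] [Finite ι]
    {f : X → ι → ℝ} {x : X} (hf : ContinuousAt f x) :
    ∀ᶠ x' in 𝓝 x, (f x).support ⊆ (f x').support := by
  simp only [Function.support_subset_iff, Function.mem_support]
  refine eventually_all.2 fun i => ?_
  by_cases h : f x i = 0
  · exact Eventually.of_forall fun _ h' => absurd h h'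
  · exact ((continuous_apply i).continuousAt.comp hf).eventually_ne h |>.mono fun _ h' _ => h'

noncomputable def kerProj {m ι R : Type*} [Fintype m] [DecidableEq m] [Fintype ι] [DecidableEq ι]
    [Field R] (A : Matrix m ι R) : Matrix ι ι R :=
  1 - Aᵀ * (A * Aᵀ)⁻¹ * A

section KerProj

variable {m ι R : Type*} [Fintype m] [DecidableEq m] [Fintype ι] [DecidableEq ι] [Field R]
  (A : Matrix m ι R)

theorem transpose_kerProj : (kerProj A)ᵀ = kerProj A := by
  have hG : (A * Aᵀ)ᵀ = A * Aᵀ := by rw [transpose_mul, transpose_transpose]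
  simp only [kerProj, transpose_sub, transpose_one, transpose_mul, transpose_transpose,
    transpose_nonsing_inv, hG, Matrix.mul_assoc]

theorem kerProj_mul_self (h : IsUnit (A * Aᵀ).det) : kerProj A * kerProj A = kerProj A := by
  have hX : Aᵀ * (A * Aᵀ)⁻¹ * A * (Aᵀ * (A * Aᵀ)⁻¹ * A) = Aᵀ * (A * Aᵀ)⁻¹ * A := by
    simp only [Matrix.mul_assoc]
    rw [← Matrix.mul_assoc A, nonsing_inv_mul_cancel_left (A * Aᵀ) _ h]
  simp only [kerProj, sub_mul, mul_sub, Matrix.one_mul, Matrix.mul_one, hX]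
  abel

theorem kerProj_mulVec_of_mulVec_eq_zero {x : ι → R} (hx : A *ᵥ x = 0) : kerProj A *ᵥ x = x := by
  rw [kerProj, sub_mulVec, one_mulVec, ← mulVec_mulVec, hx, mulVec_zero, sub_zero]

theorem kerProj_mulVec_transpose_mulVec (h : IsUnit (A * Aᵀ).det) (w : m → R) :
    kerProj A *ᵥ (Aᵀ *ᵥ w) = 0 := by
  rw [kerProj, sub_mulVec, one_mulVec, mulVec_mulVec, Matrix.mul_assoc, Matrix.mul_assoc,
    nonsing_inv_mul _ h, Matrix.mul_one, sub_self]

theorem dotProduct_kerProj_mulVec (v w : ι → R) :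
    v ⬝ᵥ kerProj A *ᵥ w = kerProj A *ᵥ v ⬝ᵥ w := by
  rw [dotProduct_mulVec, ← mulVec_transpose, transpose_kerProj]

theorem dotProduct_kerProj_mulVec_self (h : IsUnit (A * Aᵀ).det) (v : ι → R) :
    v ⬝ᵥ kerProj A *ᵥ v = kerProj A *ᵥ v ⬝ᵥ kerProj A *ᵥ v := by
  rw [dotProduct_kerProj_mulVec A (kerProj A *ᵥ v), mulVec_mulVec, kerProj_mul_self A h,
    dotProduct_comm]

end KerProj

theorem isUnit_det_mul_transpose {m ι R : Type*} [Fintype m] [DecidableEq m] [Fintype ι]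
    [Field R] [LinearOrder R] [IsStrictOrderedRing R] {A : Matrix m ι R}
    (h : LinearIndependent R A.row) : IsUnit (A * Aᵀ).det := by
  rw [← isUnit_iff_isUnit_det, ← mulVec_injective_iff_isUnit, ← coe_mulVecLin,
    ← LinearMap.ker_eq_bot]
  have hker := ker_mulVecLin_transpose_mul_self Aᵀ
  rw [transpose_transpose] at hker
  rw [hker, LinearMap.ker_eq_bot, coe_mulVecLin, mulVec_injective_iff]
  exact h

section Projection

variable {n : ℕ} {Pc : (Fin n → ℝ) → Fin n → ℝ}

theorem convex_coneC : Convex ℝ (coneC n) := by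
  intro x hx y hy s t hs ht _
  refine ⟨fun i j hij => ?_, fun i => ?_⟩
  · simp only [Pi.add_apply, Pi.smul_apply, smul_eq_mul]
    gcongr
    exacts [hx.1 i j hij, hy.1 i j hij]
  · simp only [Pi.add_apply, Pi.smul_apply, smul_eq_mul]
    have := hx.2 i
    have := hy.2 i
    positivity

theorem smul_mem_coneC {x : Fin n → ℝ} (hx : x ∈ coneC n) {t : ℝ} (ht : 0 ≤ t) :
    t • x ∈ coneC n :=
  ⟨fun i j hij => mul_le_mul_of_nonneg_left (hx.1 i j hij) ht, fun i => mul_nonneg ht (hx.2 i)⟩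

theorem IsProjC.dotProduct_le (hPc : IsProjC Pc) (d : Fin n → ℝ) {x : Fin n → ℝ}
    (hx : x ∈ coneC n) : (Pc d - d) ⬝ᵥ (Pc d - d) ≤ (x - d) ⬝ᵥ (x - d) := by
  have h := (hPc d).2 x hx
  simp only [← Pi.sub_apply, sum_sq_eq_dotProduct] at h
  linarith

theorem IsProjC.dotProduct_sub_nonpos (hPc : IsProjC Pc) (d : Fin n → ℝ) {x : Fin n → ℝ}
    (hx : x ∈ coneC n) : (d - Pc d) ⬝ᵥ (x - Pc d) ≤ 0 := by
  set e := Pc d - d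
  set w := x - Pc d
  have hquad : ∀ t ∈ Ioc (0 : ℝ) 1, 0 ≤ (2 * (e ⬝ᵥ w)) * t + (w ⬝ᵥ w) * t ^ 2 := by
    intro t ht
    have h := hPc.dotProduct_le d (convex_coneC.add_smul_sub_mem (hPc d).1 hx ⟨ht.1.le, ht.2⟩)
    rw [show Pc d + t • w - d = e + t • w by simp only [e]; abel] at h
    simp only [dotProduct_add, add_dotProduct, dotProduct_smul, smul_dotProduct, smul_eq_mul,
      dotProduct_comm w e] at h
    linarith
  have := nonneg_of_forall_mul_add_mul_sq_nonneg hquad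
  rw [show d - Pc d = -e by simp only [e, neg_sub], neg_dotProduct]
  linarith

theorem IsProjC.dotProduct_sub_self_eq_zero (hPc : IsProjC Pc) (d : Fin n → ℝ) :
    (d - Pc d) ⬝ᵥ Pc d = 0 := by
  have h₀ := hPc.dotProduct_sub_nonpos d (smul_mem_coneC (hPc d).1 le_rfl : (0 : ℝ) • Pc d ∈ _)
  have h₂ := hPc.dotProduct_sub_nonpos d (smul_mem_coneC (hPc d).1 zero_le_two)
  rw [zero_smul, zero_sub, dotProduct_neg] at h₀
  rw [two_smul, add_sub_cancel_right] at h₂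
  linarith

theorem IsProjC.dotProduct_sub_le (hPc : IsProjC Pc) (d d' : Fin n → ℝ) :
    (Pc d - Pc d') ⬝ᵥ (Pc d - Pc d') ≤ (d - d') ⬝ᵥ (Pc d - Pc d') := by
  have h := hPc.dotProduct_sub_nonpos d (hPc d').1
  have h' := hPc.dotProduct_sub_nonpos d' (hPc d).1
  simp only [dotProduct_sub, sub_dotProduct] at h h' ⊢
  linarith

theorem IsProjC.continuous (hPc : IsProjC Pc) : Continuous Pc := by
  let Q : EuclideanSpace ℝ (Fin n) → EuclideanSpace ℝ (Fin n) :=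
    fun x => WithLp.toLp 2 (Pc (WithLp.ofLp x))
  have hQ : LipschitzWith 1 Q := LipschitzWith.of_dist_le_mul fun x y => by
    rw [dist_eq_norm, dist_eq_norm, NNReal.coe_one, one_mul]
    have h₁ : ‖Q x - Q y‖ ^ 2 ≤ inner ℝ (x - y) (Q x - Q y) := by
      rw [← real_inner_self_eq_norm_sq]
      simp only [EuclideanSpace.inner_eq_star_dotProduct, star_trivial, WithLp.ofLp_sub, Q]
      have h := hPc.dotProduct_sub_le (WithLp.ofLp x) (WithLp.ofLp y)
      rwa [dotProduct_comm (WithLp.ofLp x - _)] at h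
    have h₂ := real_inner_le_norm (x - y) (Q x - Q y)
    nlinarith [norm_nonneg (x - y), norm_nonneg (Q x - Q y)]
  exact (PiLp.continuous_ofLp 2 _).comp (hQ.continuous.comp (PiLp.continuous_toLp 2 _))

theorem IsProjC.half_dotProduct_sub_le (hPc : IsProjC Pc) (d d' : Fin n → ℝ) :
    Pc d' ⬝ᵥ Pc d' / 2 - Pc d ⬝ᵥ Pc d / 2 ≤ Pc d' ⬝ᵥ (d' - d) := by
  have hmin := hPc.dotProduct_le d (hPc d').1
  have horth := hPc.dotProduct_sub_self_eq_zero d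
  have horth' := hPc.dotProduct_sub_self_eq_zero d'
  simp only [dotProduct_sub, sub_dotProduct, dotProduct_comm d, dotProduct_comm d']
    at hmin horth horth' ⊢
  linarith

end Projection

section Bmat

variable {n : ℕ}

theorem det_Bmat : (Bmat n).det = 1 := by
  rw [det_of_isUpperTriangular]
  · simp [Bmat]
  · intro i j hij
    have : (j : ℕ) < i := hij
    simp only [Bmat, of_apply]
    rw [if_neg (by omega), if_neg (by omega)]

theorem isUnit_Bmat : IsUnit (Bmat n) := by
  rw [isUnit_iff_isUnit_det, det_Bmat]
  exact isUnit_one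

theorem isUnit_det_subRows_mul_transpose (Γ : Finset (Fin n)) :
    IsUnit (subRows Γ * (subRows Γ)ᵀ).det :=
  isUnit_det_mul_transpose
    ((linearIndependent_rows_iff_isUnit.2 isUnit_Bmat).comp _ Subtype.val_injective)

theorem transpose_subRows_mulVec {Γ : Finset (Fin n)} {z : Fin n → ℝ}
    (hz : ∀ i, z i ≠ 0 → i ∈ Γ) :
    (subRows Γ)ᵀ *ᵥ (fun i : Γ => z i) = (Bmat n)ᵀ *ᵥ z := by
  ext j
  simp only [mulVec, dotProduct, transpose_apply, subRows, of_apply]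
  rw [Finset.sum_coe_sort Γ (fun i => Bmat n i j * z i)]
  refine Finset.sum_subset (Finset.subset_univ Γ) fun i _ hi => ?_
  rw [not_imp_comm.1 (hz i) hi, mul_zero]

theorem Hmat_eq_kerProj (Γ : Finset (Fin n)) : Hmat Γ = kerProj (subRows Γ) := rfl

end Bmat

section Kset

variable {n : ℕ} {Pc : (Fin n → ℝ) → Fin n → ℝ}

theorem transpose_Bmat_mulVec_zdual (d : Fin n → ℝ) : (Bmat n)ᵀ *ᵥ zdual Pc d = d - Pc d := by
  rw [zdual, mulVec_mulVec,
    mul_nonsing_inv _ (isUnit_det_transpose _ (isUnit_Bmat.map detMonoidHom)), one_mulVec]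

theorem Hmat_mulVec_of_mem_Kset {d : Fin n → ℝ} {Γ : Finset (Fin n)} (hΓ : Γ ∈ Kset Pc d) :
    Hmat Γ *ᵥ d = Pc d := by
  have hP : subRows Γ *ᵥ Pc d = 0 := funext fun i => hΓ.2 i i.2
  have hd : d = Pc d + (subRows Γ)ᵀ *ᵥ (fun i : Γ => zdual Pc d i) := by
    rw [transpose_subRows_mulVec hΓ.1, transpose_Bmat_mulVec_zdual, add_sub_cancel]
  conv_lhs => rw [hd]
  rw [Hmat_eq_kerProj, mulVec_add, kerProj_mulVec_of_mulVec_eq_zero _ hP,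
    kerProj_mulVec_transpose_mulVec _ (isUnit_det_subRows_mul_transpose Γ), add_zero]

theorem IsProjC.eventually_Kset_subset (hPc : IsProjC Pc) (d : Fin n → ℝ) :
    ∀ᶠ d' in 𝓝 d, Kset Pc d' ⊆ Kset Pc d := by
  have hP := hPc.continuous
  have hz : Continuous (zdual Pc) := by unfold zdual; fun_prop
  filter_upwards [hz.continuousAt.eventually_support_subset,
    (show Continuous fun d => Bmat n *ᵥ Pc d by fun_prop).continuousAt.eventually_support_subset]
    with d' hsupp hactive Γ hΓ
  exact ⟨fun i hi => hΓ.1 i (hsupp hi), fun i hi => not_imp_not.1 (@hactive i) (hΓ.2 i hi)⟩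

end Kset

section Dual

variable {n : ℕ} {Pc : (Fin n → ℝ) → Fin n → ℝ} {lam b : Fin n → ℝ}

theorem continuous_psiFun (hPc : IsProjC Pc) (τ : ℝ) : Continuous (psiFun Pc lam b τ) := by
  have := hPc.continuous
  unfold psiFun
  fun_prop

theorem phiFun_sub_le (hPc : IsProjC Pc) (τ y y' : ℝ) :
    phiFun Pc lam b τ y' - phiFun Pc lam b τ y ≤ (y' - y) * psiFun Pc lam b τ y' := by
  have h := hPc.half_dotProduct_sub_le (y • lam + b) (y' • lam + b)
  rw [show y' • lam + b - (y • lam + b) = (y' - y) • lam by rw [sub_smul]; abel,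
    dotProduct_smul, smul_eq_mul] at h
  simp only [phiFun, psiFun, sum_sq_eq_dotProduct]
  change _ ≤ (y' - y) * (Pc (y' • lam + b) ⬝ᵥ lam - τ)
  linarith

theorem psiFun_eq_zero_of_forall_phiFun_le (hPc : IsProjC Pc) {τ ystar : ℝ}
    (hmin : ∀ y, phiFun Pc lam b τ ystar ≤ phiFun Pc lam b τ y) :
    psiFun Pc lam b τ ystar = 0 :=
  eq_zero_of_forall_sub_mul_nonneg (continuous_psiFun hPc τ).continuousAt fun y => by
    linarith [hmin y, phiFun_sub_le (lam := lam) (b := b) hPc τ ystar y]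

theorem psiFun_eq_of_mem_Kset (τ : ℝ) {y : ℝ} {Γ : Finset (Fin n)}
    (hΓ : Γ ∈ Kset Pc (y • lam + b)) :
    psiFun Pc lam b τ y = Hmat Γ *ᵥ lam ⬝ᵥ (y • lam + b) - τ := by
  rw [Hmat_eq_kerProj, ← dotProduct_kerProj_mulVec, ← Hmat_eq_kerProj,
    Hmat_mulVec_of_mem_Kset hΓ, dotProduct_comm]
  rfl

end Dual

theorem stmt18_general {n : ℕ} (lam : Fin n → ℝ)
    (τ : ℝ) (hτ : 0 < τ) (b : Fin n → ℝ)
    (Pc : (Fin n → ℝ) → Fin n → ℝ) (hPc : IsProjC Pc)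
    (ystar : ℝ)
    (hmin : ∀ y : ℝ, phiFun Pc lam b τ ystar ≤ phiFun Pc lam b τ y) :
    ∃ ε > (0:ℝ), ∀ y : ℝ, |y - ystar| < ε → ∀ M ∈ Mset Pc lam b y,
      0 < M ∧ y - psiFun Pc lam b τ y / M = ystar := by
  have hψ := psiFun_eq_zero_of_forall_phiFun_le hPc hmin
  have hK := ((show Continuous fun y : ℝ => y • lam + b by fun_prop).tendsto ystar).eventually
    (hPc.eventually_Kset_subset (ystar • lam + b))
  obtain ⟨ε, hε, hball⟩ := Metric.eventually_nhds_iff.1 hK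
  refine ⟨ε, hε, fun y hy M ⟨H, ⟨Γ, hΓ, hH⟩, hM⟩ => ?_⟩
  subst hH hM
  have hψy := psiFun_eq_of_mem_Kset τ hΓ
  have hψs := psiFun_eq_of_mem_Kset τ (hball (by rwa [Real.dist_eq]) hΓ)
  set v := Hmat Γ *ᵥ lam
  have hv : v ≠ 0 := fun hv => by rw [hv, zero_dotProduct] at hψs; linarith
  have hsq : lam ⬝ᵥ v = v ⬝ᵥ v :=
    dotProduct_kerProj_mulVec_self _ (isUnit_det_subRows_mul_transpose Γ) lam
  have hpos : 0 < lam ⬝ᵥ v := hsq ▸ lt_of_le_of_ne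
    (Fintype.sum_nonneg fun i => mul_self_nonneg (v i)) (Ne.symm (dotProduct_self_eq_zero.not.2 hv))
  have hlin : psiFun Pc lam b τ y = (y - ystar) * (lam ⬝ᵥ v) := by
    rw [hψy, ← sub_zero (_ - τ), ← hψ, hψs, dotProduct_comm lam]
    simp only [dotProduct_add, dotProduct_smul, smul_eq_mul]
    ring
  refine ⟨hpos, ?_⟩
  rw [hlin, mul_div_cancel_right₀ _ hpos.ne']
  ring

/-- finite termination of the semismooth Newton step. If `y*` is the
unique minimizer of `φ`, then there is `ε > 0` such that for every `y` with
`|y − y*| < ε` and every `M ∈ M(y)`: `M > 0` and `y − ψ(y)/M = y*`. -/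
theorem stmt18 {n : ℕ} (hn : 0 < n) (lam : Fin n → ℝ)
    (hmono : ∀ i j : Fin n, i ≤ j → lam j ≤ lam i)
    (hnonneg : ∀ i, 0 ≤ lam i) (hlam : lam ≠ 0)
    (τ : ℝ) (hτ : 0 < τ) (b : Fin n → ℝ)
    (Pc : (Fin n → ℝ) → Fin n → ℝ) (hPc : IsProjC Pc)
    (ystar : ℝ)
    (hmin : ∀ y : ℝ, phiFun Pc lam b τ ystar ≤ phiFun Pc lam b τ y)
    (huniq : ∀ y' : ℝ, (∀ y : ℝ, phiFun Pc lam b τ y' ≤ phiFun Pc lam b τ y) → y' = ystar) :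
    ∃ ε > (0:ℝ), ∀ y : ℝ, |y - ystar| < ε → ∀ M ∈ Mset Pc lam b y,
      0 < M ∧ y - psiFun Pc lam b τ y / M = ystar :=
  stmt18_general lam τ hτ b Pc hPc ystar hmin
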